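/- arXiv:2107.12761 — 5 statements merged into one kernel-verified Lean document; each statement's English description precedes it below -/
import Mathlib

section
/- Let A be a locally C*-algebra with topology generated by an upward directed family of C*-seminorms {p_λ}. Then the set b(A) = {a ∈ A : sup_λ p_λ(a) < ∞} of bounded elements, equipped with the norm ‖a‖_∞ = sup_λ p_λ(a), is a C*-algebra. -/
/-!
Each `p λ` is dominated by `‖·‖∞` on `b(A)`, so every estimate for the seminorms (triangle
inequality, homogeneity, submultiplicativity, `p λ (a⋆a) = p λ a ^ 2`) passes to their
supremum. A `‖·‖∞`-Cauchy sequence is Cauchy for every `p λ`, uniformly in `λ`, hence converges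
in the complete space `A`; by continuity of each `p λ` the uniform bounds
`p λ (uₙ - uₘ) ≤ ε` survive the limit `m → ∞`, which gives both boundedness of the limit and
convergence in `‖·‖∞`.
-/

open Filter Topology

namespace SeminormFamily

section Module

variable {𝕜 E ι : Type*} [NormedField 𝕜] [AddCommGroup E] [Module 𝕜 E]

def bddElements (p : SeminormFamily 𝕜 E ι) : Submodule 𝕜 E where
  carrier := {a | BddAbove (Set.range fun l => p l a)}
  zero_mem' := ⟨0, Set.forall_mem_range.2 fun l => (map_zero (p l)).le⟩
  add_mem' := by
    rintro a b ⟨c, hc⟩ ⟨d, hd⟩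
    refine ⟨c + d, Set.forall_mem_range.2 fun l => ?_⟩
    exact (map_add_le_add _ _ _).trans
      (add_le_add (hc (Set.mem_range_self l)) (hd (Set.mem_range_self l)))
  smul_mem' := by
    rintro z a ⟨c, hc⟩
    refine ⟨‖z‖ * c, Set.forall_mem_range.2 fun l => ?_⟩
    rw [map_smul_eq_mul]
    exact mul_le_mul_of_nonneg_left (hc (Set.mem_range_self l)) (norm_nonneg z)

/-- Real `⨆` is `0` on unbounded families, so this is the norm `‖·‖∞` only on `bddElements`. -/
noncomputable def supNorm (p : SeminormFamily 𝕜 E ι) (a : E) : ℝ := ⨆ l, p l a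

variable {p : SeminormFamily 𝕜 E ι} {a b : E}

lemma mem_bddElements_of_le {c : ℝ} (h : ∀ l, p l a ≤ c) : a ∈ p.bddElements :=
  ⟨c, Set.forall_mem_range.2 h⟩

lemma le_supNorm (ha : a ∈ p.bddElements) (l : ι) : p l a ≤ p.supNorm a := le_ciSup ha l

lemma supNorm_nonneg (a : E) : 0 ≤ p.supNorm a := Real.iSup_nonneg fun _ => apply_nonneg _ _

lemma supNorm_le {c : ℝ} (h : ∀ l, p l a ≤ c) (hc : 0 ≤ c) : p.supNorm a ≤ c :=
  Real.iSup_le h hc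

lemma supNorm_add_le (ha : a ∈ p.bddElements) (hb : b ∈ p.bddElements) :
    p.supNorm (a + b) ≤ p.supNorm a + p.supNorm b :=
  supNorm_le
    (fun l => (map_add_le_add _ _ _).trans (add_le_add (le_supNorm ha l) (le_supNorm hb l)))
    (add_nonneg (supNorm_nonneg a) (supNorm_nonneg b))

lemma supNorm_smul (z : 𝕜) (a : E) : p.supNorm (z • a) = ‖z‖ * p.supNorm a := by
  simp only [supNorm, map_smul_eq_mul, Real.mul_iSup_of_nonneg (norm_nonneg z)]

lemma eq_zero_of_supNorm_eq_zero [TopologicalSpace E] [T1Space E] (hp : WithSeminorms p)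
    (ha : a ∈ p.bddElements) (h0 : p.supNorm a = 0) : a = 0 := by
  by_contra hne
  obtain ⟨l, hl⟩ := hp.separating_of_T1 a hne
  exact hl (le_antisymm (h0 ▸ le_supNorm ha l) (apply_nonneg _ _))

lemma cauchySeq_of_forall_lt [UniformSpace E] [IsUniformAddGroup E] (hp : WithSeminorms p)
    {u : ℕ → E} (h : ∀ l, ∀ ε > 0, ∃ n₀, ∀ m ≥ n₀, ∀ n ≥ n₀, p l (u m - u n) < ε) :
    CauchySeq u := by
  rw [cauchySeq_iff_tendsto, uniformity_eq_comap_nhds_zero E, tendsto_comap_iff,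
    hp.tendsto_nhds]
  intro l ε hε
  obtain ⟨n₀, hn₀⟩ := h l ε hε
  refine eventually_atTop.2 ⟨(n₀, n₀), fun q hq => ?_⟩
  simpa using hn₀ q.2 hq.2 q.1 hq.1

lemma apply_sub_le_of_tendsto [TopologicalSpace E] (hp : WithSeminorms p) {α : Type*}
    {f : Filter α} [f.NeBot] {u : α → E} (hu : Tendsto u f (𝓝 a)) {l : ι} {ε : ℝ}
    (h : ∀ᶠ x in f, p l (b - u x) ≤ ε) : p l (b - a) ≤ ε :=
  have := hp.topologicalAddGroup
  le_of_tendsto (((hp.continuous_seminorm l).tendsto _).comp (hu.const_sub b)) h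

lemma exists_tendsto_supNorm_of_cauchy [UniformSpace E] [IsUniformAddGroup E] [CompleteSpace E]
    (hp : WithSeminorms p) {u : ℕ → E} (hu : ∀ n, u n ∈ p.bddElements)
    (hcau : ∀ ε > 0, ∃ n₀, ∀ m ≥ n₀, ∀ n ≥ n₀, p.supNorm (u m - u n) < ε) :
    ∃ a ∈ p.bddElements, ∀ ε > 0, ∃ n₀, ∀ n ≥ n₀, p.supNorm (u n - a) < ε := by
  have hle (m n : ℕ) (l : ι) : p l (u m - u n) ≤ p.supNorm (u m - u n) :=
    le_supNorm (sub_mem (hu m) (hu n)) l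
  obtain ⟨a, ha⟩ := cauchySeq_tendsto_of_complete <| cauchySeq_of_forall_lt hp fun l ε hε =>
    (hcau ε hε).imp fun _ h m hm n hn => (hle m n l).trans_lt (h m hm n hn)
  have hunif : ∀ ε > 0, ∃ n₀, ∀ n ≥ n₀, ∀ l, p l (u n - a) ≤ ε := fun ε hε =>
    (hcau ε hε).imp fun n₀ h n hn l => apply_sub_le_of_tendsto hp ha <|
      (eventually_ge_atTop n₀).mono fun m hm => (hle n m l).trans (h n hn m hm).le
  obtain ⟨n₁, hn₁⟩ := hunif 1 one_pos
  have haA : a ∈ p.bddElements := by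
    simpa using sub_mem (hu n₁) (mem_bddElements_of_le (hn₁ n₁ le_rfl))
  refine ⟨a, haA, fun ε hε => ?_⟩
  obtain ⟨n₀, hn₀⟩ := hunif (ε / 2) (half_pos hε)
  exact ⟨n₀, fun n hn => (supNorm_le (hn₀ n hn) (half_pos hε).le).trans_lt (half_lt_self hε)⟩

end Module

section Algebra

variable {𝕜 A ι : Type*} [NormedField 𝕜] [Ring A] [Algebra 𝕜 A] {p : SeminormFamily 𝕜 A ι}
  {a b : A}

lemma apply_mul_le_supNorm_mul (hmul : ∀ l a b, p l (a * b) ≤ p l a * p l b)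
    (ha : a ∈ p.bddElements) (hb : b ∈ p.bddElements) (l : ι) :
    p l (a * b) ≤ p.supNorm a * p.supNorm b :=
  (hmul l a b).trans
    (mul_le_mul (le_supNorm ha l) (le_supNorm hb l) (apply_nonneg _ _) (supNorm_nonneg a))

lemma mul_mem_bddElements (hmul : ∀ l a b, p l (a * b) ≤ p l a * p l b)
    (ha : a ∈ p.bddElements) (hb : b ∈ p.bddElements) : a * b ∈ p.bddElements :=
  mem_bddElements_of_le (apply_mul_le_supNorm_mul hmul ha hb)

lemma supNorm_mul_le (hmul : ∀ l a b, p l (a * b) ≤ p l a * p l b)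
    (ha : a ∈ p.bddElements) (hb : b ∈ p.bddElements) :
    p.supNorm (a * b) ≤ p.supNorm a * p.supNorm b :=
  supNorm_le (apply_mul_le_supNorm_mul hmul ha hb)
    (mul_nonneg (supNorm_nonneg a) (supNorm_nonneg b))

variable [StarRing A]

lemma star_mem_bddElements (hstar : ∀ l a, p l (star a) = p l a) (ha : a ∈ p.bddElements) :
    star a ∈ p.bddElements :=
  mem_bddElements_of_le fun l => (hstar l a).le.trans (le_supNorm ha l)

lemma supNorm_star (hstar : ∀ l a, p l (star a) = p l a) (a : A) :
    p.supNorm (star a) = p.supNorm a := by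
  simp only [supNorm, hstar]

lemma one_mem_bddElements (hC : ∀ l a, p l (star a * a) = p l a ^ 2) :
    (1 : A) ∈ p.bddElements := by
  refine mem_bddElements_of_le (c := 1) fun l => ?_
  have h := hC l 1
  rw [star_one, one_mul] at h
  nlinarith [apply_nonneg (p l) (1 : A)]

lemma supNorm_star_mul_self (hC : ∀ l a, p l (star a * a) = p l a ^ 2)
    (ha : a ∈ p.bddElements) : p.supNorm (star a * a) = p.supNorm a ^ 2 := by
  have hbound (l : ι) : p l (star a * a) ≤ p.supNorm a ^ 2 :=
    hC l a ▸ pow_le_pow_left₀ (apply_nonneg _ _) (le_supNorm ha l) 2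
  refine le_antisymm (supNorm_le hbound (sq_nonneg _)) ?_
  have hsqrt : p.supNorm a ≤ √(p.supNorm (star a * a)) :=
    supNorm_le (fun l => Real.le_sqrt_of_sq_le
      (hC l a ▸ le_supNorm (mem_bddElements_of_le hbound) l)) (Real.sqrt_nonneg _)
  exact (Real.le_sqrt (supNorm_nonneg _) (supNorm_nonneg _)).1 hsqrt

end Algebra

end SeminormFamily

open SeminormFamily

theorem stmt1_general {A : Type*} [Ring A] [Algebra ℂ A] [StarRing A]
    [UniformSpace A] [IsUniformAddGroup A] [CompleteSpace A] [T2Space A]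
    {Λ : Type*}
    (p : SeminormFamily ℂ A Λ)
    (htop : WithSeminorms p)
    (hmul : ∀ (l : Λ) (a b : A), p l (a * b) ≤ p l a * p l b)
    (hstar : ∀ (l : Λ) (a : A), p l (star a) = p l a)
    (hCstar : ∀ (l : Λ) (a : A), p l (star a * a) = p l a ^ 2) :
    -- b(A) and its norm
    ∀ bA : Set A, bA = {a : A | BddAbove (Set.range fun l : Λ => p l a)} →
    ∀ N : A → ℝ, (∀ a, N a = ⨆ l : Λ, p l a) →
    -- b(A) is a *-subalgebra
    ((1 : A) ∈ bA) ∧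
    (∀ a ∈ bA, ∀ b ∈ bA, a + b ∈ bA ∧ a * b ∈ bA) ∧
    (∀ a ∈ bA, star a ∈ bA ∧ ∀ z : ℂ, z • a ∈ bA) ∧
    -- ‖·‖∞ is a norm on b(A)
    (∀ a ∈ bA, ∀ b ∈ bA, N (a + b) ≤ N a + N b) ∧
    (∀ a ∈ bA, ∀ z : ℂ, N (z • a) = ‖z‖ * N a) ∧
    (∀ a ∈ bA, 0 ≤ N a) ∧
    (∀ a ∈ bA, N a = 0 → a = 0) ∧
    -- submultiplicative, star-invariant, C*-identity
    (∀ a ∈ bA, ∀ b ∈ bA, N (a * b) ≤ N a * N b) ∧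
    (∀ a ∈ bA, N (star a) = N a) ∧
    (∀ a ∈ bA, N (star a * a) = N a ^ 2) ∧
    -- completeness of b(A) with respect to ‖·‖∞
    (∀ u : ℕ → A, (∀ n, u n ∈ bA) →
      (∀ ε : ℝ, 0 < ε → ∃ n₀, ∀ m ≥ n₀, ∀ n ≥ n₀, N (u m - u n) < ε) →
      ∃ a ∈ bA, ∀ ε : ℝ, 0 < ε → ∃ n₀, ∀ n ≥ n₀, N (u n - a) < ε) := by
  rintro _ rfl N hN
  obtain rfl : N = p.supNorm := funext hN
  exact ⟨one_mem_bddElements hCstar,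
    fun a ha b hb => ⟨p.bddElements.add_mem ha hb, mul_mem_bddElements hmul ha hb⟩,
    fun a ha => ⟨star_mem_bddElements hstar ha, fun z => p.bddElements.smul_mem z ha⟩,
    fun a ha b hb => supNorm_add_le ha hb,
    fun a _ z => supNorm_smul z a,
    fun a _ => supNorm_nonneg a,
    fun a ha => eq_zero_of_supNorm_eq_zero htop ha,
    fun a ha b hb => supNorm_mul_le hmul ha hb,
    fun a _ => supNorm_star hstar a,
    fun a ha => supNorm_star_mul_self hCstar ha,
    fun u hu hcau => exists_tendsto_supNorm_of_cauchy htop hu hcau⟩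

/-- In a locally C*-algebra `A` (a complete Hausdorff topological
*-algebra whose topology is given by an upward directed family of C*-seminorms
`p l`), the set `b(A)` of bounded elements, with the norm `‖a‖∞ = ⨆ l, p l a`,
is a C*-algebra: it is a *-subalgebra, `‖·‖∞` is a (submultiplicative,
star-invariant) norm satisfying the C*-identity, and `b(A)` is complete for it. -/
theorem stmt1 {A : Type*} [Ring A] [Algebra ℂ A] [StarRing A] [StarModule ℂ A]
    [UniformSpace A] [IsUniformAddGroup A] [CompleteSpace A] [T2Space A]
    {Λ : Type*} [Nonempty Λ]
    (p : SeminormFamily ℂ A Λ)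
    (htop : WithSeminorms p)
    (hdir : ∀ l1 l2 : Λ, ∃ l3 : Λ, (∀ a, p l1 a ≤ p l3 a) ∧ ∀ a, p l2 a ≤ p l3 a)
    (hmul : ∀ (l : Λ) (a b : A), p l (a * b) ≤ p l a * p l b)
    (hstar : ∀ (l : Λ) (a : A), p l (star a) = p l a)
    (hCstar : ∀ (l : Λ) (a : A), p l (star a * a) = p l a ^ 2) :
    -- b(A) and its norm
    ∀ bA : Set A, bA = {a : A | BddAbove (Set.range fun l : Λ => p l a)} →
    ∀ N : A → ℝ, (∀ a, N a = ⨆ l : Λ, p l a) →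
    -- b(A) is a *-subalgebra
    ((1 : A) ∈ bA) ∧
    (∀ a ∈ bA, ∀ b ∈ bA, a + b ∈ bA ∧ a * b ∈ bA) ∧
    (∀ a ∈ bA, star a ∈ bA ∧ ∀ z : ℂ, z • a ∈ bA) ∧
    -- ‖·‖∞ is a norm on b(A)
    (∀ a ∈ bA, ∀ b ∈ bA, N (a + b) ≤ N a + N b) ∧
    (∀ a ∈ bA, ∀ z : ℂ, N (z • a) = ‖z‖ * N a) ∧
    (∀ a ∈ bA, 0 ≤ N a) ∧
    (∀ a ∈ bA, N a = 0 → a = 0) ∧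
    -- submultiplicative, star-invariant, C*-identity
    (∀ a ∈ bA, ∀ b ∈ bA, N (a * b) ≤ N a * N b) ∧
    (∀ a ∈ bA, N (star a) = N a) ∧
    (∀ a ∈ bA, N (star a * a) = N a ^ 2) ∧
    -- completeness of b(A) with respect to ‖·‖∞
    (∀ u : ℕ → A, (∀ n, u n ∈ bA) →
      (∀ ε : ℝ, 0 < ε → ∃ n₀, ∀ m ≥ n₀, ∀ n ≥ n₀, N (u m - u n) < ε) →
      ∃ a ∈ bA, ∀ ε : ℝ, 0 < ε → ∃ n₀, ∀ n ≥ n₀, N (u n - a) < ε) :=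
  stmt1_general p htop hmul hstar hCstar
end

section
/- An element a of a locally C*-algebra A is local positive (i.e., a = b*b + c with p_λ(c) = 0 for some b, c ∈ A and some λ) if and only if there exists λ ∈ Λ such that the image π_λ(a) of a in the quotient C*-algebra A_λ = A/ker(p_λ) is a positive element of A_λ. -/
/-! Positivity in `A_λ` lifts along the surjection `π_λ`: a positive element of a C*-algebra is
of the form `star y * y`, and any preimage `b` of `y` gives `a = star b * b + (a - star b * b)`
with the second summand in `ker π_λ = ker p_λ`. -/

theorem exists_map_eq_map_star_mul_self_of_nonneg {F R B : Type*} [Mul R] [Star R]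
    [NonUnitalCStarAlgebra B] [PartialOrder B] [StarOrderedRing B]
    [FunLike F R B] [MulHomClass F R B] [StarHomClass F R B]
    {f : F} (hf : Function.Surjective f) {a : R} (ha : 0 ≤ f a) :
    ∃ b, f a = f (star b * b) := by
  obtain ⟨y, hy⟩ := CStarAlgebra.nonneg_iff_eq_star_mul_self.mp ha
  obtain ⟨b, rfl⟩ := hf y
  exact ⟨b, by rw [hy, map_mul, map_star]⟩

theorem stmt3_general {A : Type*} [Ring A] [Algebra ℂ A] [StarRing A]
    {Λ : Type*}
    (p : SeminormFamily ℂ A Λ)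
    (Aq : Λ → Type*)
    [∀ l, NormedRing (Aq l)] [∀ l, StarRing (Aq l)] [∀ l, CStarRing (Aq l)]
    [∀ l, NormedAlgebra ℂ (Aq l)] [∀ l, CompleteSpace (Aq l)]
    [∀ l, StarModule ℂ (Aq l)] [∀ l, PartialOrder (Aq l)]
    [∀ l, StarOrderedRing (Aq l)]
    (π : ∀ l, A →⋆ₐ[ℂ] Aq l)
    (hsurj : ∀ l, Function.Surjective (π l))
    (hnorm : ∀ (l : Λ) (a : A), ‖π l a‖ = p l a)
    (a : A) :
    (∃ (l : Λ) (b c : A), a = star b * b + c ∧ p l c = 0) ↔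
      ∃ l : Λ, 0 ≤ π l a := by
  have map_eq_zero_iff {l : Λ} {c : A} : π l c = 0 ↔ p l c = 0 := by
    rw [← norm_eq_zero, hnorm]
  constructor
  · rintro ⟨l, b, c, rfl, hc⟩
    refine ⟨l, ?_⟩
    rw [map_add, map_eq_zero_iff.mpr hc, add_zero, map_mul, map_star]
    exact star_mul_self_nonneg _
  · rintro ⟨l, hl⟩
    let _ : CStarAlgebra (Aq l) := { }
    obtain ⟨b, hb⟩ := exists_map_eq_map_star_mul_self_of_nonneg (hsurj l) hl
    exact ⟨l, b, a - star b * b, by abel, map_eq_zero_iff.mp (by rw [map_sub, hb, sub_self])⟩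

/-- An element `a` of a locally C*-algebra `A` is local positive
(`a = star b * b + c` with `p l c = 0` for some `b, c` and some `l`) iff there
is `l` such that the image `π l a` in the quotient C*-algebra `A_l = A/ker (p l)`
is a positive element of `A_l`.  The quotient C*-algebras are given as a family
`Aq l` of C*-algebras together with surjective *-homomorphisms `π l` satisfying
`‖π l a‖ = p l a` (so that `ker (π l) = ker (p l)`). -/
theorem stmt3 {A : Type*} [Ring A] [Algebra ℂ A] [StarRing A] [StarModule ℂ A]
    {Λ : Type*} [Nonempty Λ]
    (p : SeminormFamily ℂ A Λ)
    (hdir : ∀ l1 l2 : Λ, ∃ l3 : Λ, (∀ a, p l1 a ≤ p l3 a) ∧ ∀ a, p l2 a ≤ p l3 a)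
    (hmul : ∀ (l : Λ) (a b : A), p l (a * b) ≤ p l a * p l b)
    (hstar : ∀ (l : Λ) (a : A), p l (star a) = p l a)
    (hCstar : ∀ (l : Λ) (a : A), p l (star a * a) = p l a ^ 2)
    (Aq : Λ → Type*)
    [∀ l, NormedRing (Aq l)] [∀ l, StarRing (Aq l)] [∀ l, CStarRing (Aq l)]
    [∀ l, NormedAlgebra ℂ (Aq l)] [∀ l, CompleteSpace (Aq l)]
    [∀ l, StarModule ℂ (Aq l)] [∀ l, PartialOrder (Aq l)]
    [∀ l, StarOrderedRing (Aq l)]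
    (π : ∀ l, A →⋆ₐ[ℂ] Aq l)
    (hsurj : ∀ l, Function.Surjective (π l))
    (hnorm : ∀ (l : Λ) (a : A), ‖π l a‖ = p l a)
    (a : A) :
    (∃ (l : Λ) (b c : A), a = star b * b + c ∧ p l c = 0) ↔
      ∃ l : Λ, 0 ≤ π l a :=
  stmt3_general p Aq π hsurj hnorm a
end

section
/- Let A be a unital C*-algebra, H a Hilbert space, ξ ∈ H a unit vector, and let θ_{ξ,ξ} ∈ B(H) be the rank-one projection η ↦ ⟨ξ, η⟩ξ. If c ∈ A ⊗ B(H) (minimal tensor product) and a ∈ A satisfy 0 ≤ c ≤ a ⊗ θ_{ξ,ξ}, then there exists b ∈ A with 0 ≤ b ≤ a and c = b ⊗ θ_{ξ,ξ}. -/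
/-!
Since `θ` is a projection, `b ↦ b ⊗ θ` is an injective ⋆-homomorphism `φ : A → A ⊗ B(H)`, and
`p = 1 ⊗ θ = φ 1` is a projection. From `0 ≤ c ≤ a ⊗ θ` and `(a ⊗ θ)(1 - p) = 0` one gets
`c (1 - p) = 0`, hence `c = p c p`. The compression `x ↦ p x p` sends `a' ⊗ t` to
`⟪ξ, t ξ⟫ a' ⊗ θ`, so by density and continuity it maps everything into the range of the isometry
`φ`, which is closed; thus `c = φ b`. Finally, an injective ⋆-homomorphism of C⋆-algebras
commutes with the continuous functional calculus, so it reflects positivity, giving `0 ≤ b ≤ a`.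
-/

open InnerProductSpace

lemma InnerProductSpace.rankOne_mul_mul_rankOne {𝕜 H : Type*} [RCLike 𝕜] [NormedAddCommGroup H]
    [InnerProductSpace 𝕜 H] (x y z w : H) (t : H →L[𝕜] H) :
    rankOne 𝕜 x y * t * rankOne 𝕜 z w = inner 𝕜 y (t z) • rankOne 𝕜 x w := by
  rw [mul_assoc]
  simp [ContinuousLinearMap.mul_def, comp_rankOne]

lemma IsSelfAdjoint.of_map {F R S : Type*} [Star R] [Star S] [FunLike F R S] [StarHomClass F R S]
    {f : F} (hf : Function.Injective f) {a : R} (ha : IsSelfAdjoint (f a)) : IsSelfAdjoint a :=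
  hf <| by rw [map_star, ha.star_eq]

section CStarAlgebra

variable {A B : Type*} [NonUnitalCStarAlgebra A] [PartialOrder A] [StarOrderedRing A]

namespace NonUnitalStarAlgHom

variable [NonUnitalCStarAlgebra B] [PartialOrder B] [StarOrderedRing B] {φ : A →⋆ₙₐ[ℂ] B}

lemma map_nonneg_iff (hφ : Function.Injective φ) {a : A} : 0 ≤ φ a ↔ 0 ≤ a := by
  refine ⟨fun h => ?_, fun h => map_nonneg φ h⟩
  have ha : IsSelfAdjoint a := .of_map hφ h.isSelfAdjoint
  have hnegPart : φ a⁻ = (φ a)⁻ := by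
    simpa only [CFC.negPart_def] using
      φ.map_cfcₙ (fun x : ℝ => x⁻) a (hφ := (NonUnitalStarAlgHom.isometry φ hφ).continuous)
  rwa [← CFC.negPart_eq_zero_iff a, ← map_eq_zero_iff φ hφ, hnegPart,
    CFC.negPart_eq_zero_iff _ h.isSelfAdjoint]

lemma map_le_map_iff (hφ : Function.Injective φ) {a b : A} : φ a ≤ φ b ↔ a ≤ b := by
  rw [← sub_nonneg, ← map_sub, map_nonneg_iff hφ, sub_nonneg]

end NonUnitalStarAlgHom

lemma mul_eq_zero_of_le_of_mul_eq_zero {c x q : A} (hc : 0 ≤ c) (hcx : c ≤ x)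
    (hxq : x * q = 0) : c * q = 0 := by
  have hqcq : star q * c * q = 0 := le_antisymm
    (by simpa [mul_assoc, hxq] using star_left_conjugate_le_conjugate hcx q)
    (star_left_conjugate_nonneg hc q)
  have hsqrt : CFC.sqrt c * q = 0 := by
    rw [← CStarRing.star_mul_self_eq_zero_iff, star_mul, (CFC.sqrt_nonneg c).isSelfAdjoint.star_eq,
      mul_assoc, ← mul_assoc (CFC.sqrt c), CFC.sqrt_mul_sqrt_self c hc, ← mul_assoc, hqcq]
  rw [← CFC.sqrt_mul_sqrt_self c hc, mul_assoc, hsqrt, mul_zero]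

end CStarAlgebra

lemma IsStarProjection.mul_mul_eq_of_le {A : Type*} [CStarAlgebra A] [PartialOrder A]
    [StarOrderedRing A] {p c x : A} (hp : IsStarProjection p) (hc : 0 ≤ c) (hcx : c ≤ x)
    (hx : x * p = x) : p * c * p = c := by
  have hcp : c * p = c := by
    have := mul_eq_zero_of_le_of_mul_eq_zero hc hcx (q := 1 - p)
      (by rw [mul_sub, mul_one, hx, sub_self])
    rwa [mul_sub, mul_one, sub_eq_zero, eq_comm] at this
  have hpc : p * c = c := by
    simpa [hp.isSelfAdjoint.star_eq, hc.isSelfAdjoint.star_eq] using congrArg star hcp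
  rw [hpc, hcp]

lemma ContinuousLinearMap.apply_mem_of_dense_span {𝕜 E F : Type*} [Semiring 𝕜]
    [AddCommMonoid E] [Module 𝕜 E] [TopologicalSpace E] [ContinuousAdd E]
    [ContinuousConstSMul 𝕜 E] [AddCommMonoid F] [Module 𝕜 F] [TopologicalSpace F]
    (f : E →L[𝕜] F) {s : Set E} (hs : (Submodule.span 𝕜 s).topologicalClosure = ⊤)
    {M : Submodule 𝕜 F} (hM : IsClosed (M : Set F)) (h : ∀ x ∈ s, f x ∈ M) (x : E) : f x ∈ M := by
  have hspan : Submodule.span 𝕜 s ≤ M.comap (f : E →ₗ[𝕜] F) := Submodule.span_le.2 h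
  have := Submodule.topologicalClosure_minimal _ hspan (hM.preimage f.continuous)
  rw [hs] at this
  exact this Submodule.mem_top

section TensorRight

variable {A B T : Type*}

def tensorRightHom [NonUnitalNonAssocSemiring A] [Module ℂ A] [Star A]
    [Mul B] [Star B] [NonUnitalNonAssocSemiring T] [Module ℂ T] [Star T]
    (j : A → B → T) {θ : B} (hθ : IsStarProjection θ)
    (hadd : ∀ a a', j (a + a') θ = j a θ + j a' θ) (hsmul : ∀ (z : ℂ) a, j (z • a) θ = z • j a θ)
    (hmul : ∀ a a', j a θ * j a' θ = j (a * a') (θ * θ))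
    (hstar : ∀ a, star (j a θ) = j (star a) (star θ)) :
    A →⋆ₙₐ[ℂ] T where
  toFun a := j a θ
  map_add' := hadd
  map_smul' := hsmul
  map_zero' := by rw [← zero_smul ℂ (0 : A), hsmul, zero_smul]
  map_mul' a a' := by rw [hmul, hθ.isIdempotentElem.eq]
  map_star' a := by rw [hstar, hθ.isSelfAdjoint.star_eq]

variable [CStarAlgebra A] [Mul B] [Star B] [CStarAlgebra T] {j : A → B → T} {θ : B}
  {hθ : IsStarProjection θ} {hadd : ∀ a a', j (a + a') θ = j a θ + j a' θ}
  {hsmul : ∀ (z : ℂ) a, j (z • a) θ = z • j a θ}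
  {hmul : ∀ a a', j a θ * j a' θ = j (a * a') (θ * θ)}
  {hstar : ∀ a, star (j a θ) = j (star a) (star θ)}

lemma tensorRightHom_injective [Norm B] (hθ₀ : ‖θ‖ ≠ 0) (hnorm : ∀ a, ‖j a θ‖ = ‖a‖ * ‖θ‖) :
    Function.Injective (tensorRightHom j hθ hadd hsmul hmul hstar) :=
  (injective_iff_map_eq_zero _).2 fun a ha => by
    simpa [hθ₀] using (hnorm a).symm.trans (norm_eq_zero.2 ha)

lemma mul_mul_mem_range_tensorRightHom [SMul ℂ B]
    (hinj : Function.Injective (tensorRightHom j hθ hadd hsmul hmul hstar))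
    (hmul' : ∀ a a' t t', j a t * j a' t' = j (a * a') (t * t'))
    (hsmul' : ∀ (z : ℂ) a t, j a (z • t) = z • j a t)
    (hcompress : ∀ t, ∃ z : ℂ, θ * t * θ = z • θ)
    (hdense : (Submodule.span ℂ {x : T | ∃ a t, x = j a t}).topologicalClosure = ⊤) (x : T) :
    j 1 θ * x * j 1 θ ∈ Set.range (tensorRightHom j hθ hadd hsmul hmul hstar) := by
  set φ := tensorRightHom j hθ hadd hsmul hmul hstar
  have hclosed : IsClosed (LinearMap.range (φ : A →ₗ[ℂ] T) : Set T) := by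
    rw [LinearMap.coe_range]
    exact (NonUnitalStarAlgHom.isometry φ hinj).isClosedEmbedding.isClosed_range
  refine LinearMap.mem_range.1 <|
    (ContinuousLinearMap.mulLeftRight ℂ T (j 1 θ) (j 1 θ)).apply_mem_of_dense_span
      hdense hclosed ?_ x
  rintro _ ⟨a, t, rfl⟩
  obtain ⟨z, hz⟩ := hcompress t
  refine ⟨z • a, ?_⟩
  change j (z • a) θ = j 1 θ * j a t * j 1 θ
  rw [hmul', hmul', one_mul, mul_one, hz, hsmul', hsmul]

end TensorRight

theorem stmt11_general {A : Type*}
    [NormedRing A] [StarRing A] [CStarRing A] [NormedAlgebra ℂ A]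
    [CompleteSpace A] [StarModule ℂ A] [PartialOrder A] [StarOrderedRing A]
    {H : Type*} [NormedAddCommGroup H] [InnerProductSpace ℂ H] [CompleteSpace H]
    {T : Type*}
    [NormedRing T] [StarRing T] [CStarRing T] [NormedAlgebra ℂ T]
    [CompleteSpace T] [StarModule ℂ T] [PartialOrder T] [StarOrderedRing T]
    -- the minimal tensor product A ⊗ B(H), via j a t = a ⊗ t
    (j : A → (H →L[ℂ] H) → T)
    (hadd₁ : ∀ a a' t, j (a + a') t = j a t + j a' t)
    (hsmul₁ : ∀ (z : ℂ) a t, j (z • a) t = z • j a t)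
    (hsmul₂ : ∀ (z : ℂ) a t, j a (z • t) = z • j a t)
    (hmul : ∀ a a' t t', j a t * j a' t' = j (a * a') (t * t'))
    (hstar : ∀ a t, star (j a t) = j (star a) (star t))
    (hnorm : ∀ a t, ‖j a t‖ = ‖a‖ * ‖t‖)
    (hdense : (Submodule.span ℂ {x : T | ∃ a t, x = j a t}).topologicalClosure = ⊤)
    -- the data
    (ξ : H) (hξ : ‖ξ‖ = 1) (θ : H →L[ℂ] H)
    (hθ : θ = (innerSL ℂ ξ).smulRight ξ)
    (a : A) (c : T)
    (hc₀ : 0 ≤ c) (hc₁ : c ≤ j a θ) :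
    ∃ b : A, 0 ≤ b ∧ b ≤ a ∧ c = j b θ := by
  let : CStarAlgebra A := { ‹NormedRing A›, ‹StarRing A›, ‹CStarRing A›, ‹NormedAlgebra ℂ A›,
      ‹CompleteSpace A›, ‹StarModule ℂ A› with }
  let : CStarAlgebra T := { ‹NormedRing T›, ‹StarRing T›, ‹CStarRing T›, ‹NormedAlgebra ℂ T›,
      ‹CompleteSpace T›, ‹StarModule ℂ T› with }
  subst hθ
  have hθ : IsStarProjection (rankOne ℂ ξ ξ) := isStarProjection_rankOne_self hξ
  set φ := tensorRightHom j hθ (fun a a' => hadd₁ a a' _) (fun z a => hsmul₁ z a _)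
    (fun a a' => hmul a a' _ _) (fun a => hstar a _)
  have hφ : Function.Injective φ := tensorRightHom_injective (by simp [hξ]) (fun a => hnorm a _)
  have hpcp : φ 1 * c * φ 1 = c :=
    ((IsStarProjection.one A).map φ).mul_mul_eq_of_le hc₀ hc₁ (by
      change φ a * φ 1 = φ a
      rw [← map_mul, mul_one])
  obtain ⟨b, rfl⟩ : c ∈ Set.range φ := hpcp ▸ mul_mul_mem_range_tensorRightHom hφ hmul hsmul₂
    (fun t => ⟨_, rankOne_mul_mul_rankOne ξ ξ ξ ξ t⟩) hdense c
  exact ⟨b, (φ.map_nonneg_iff hφ).1 hc₀, (φ.map_le_map_iff hφ).1 hc₁, rfl⟩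

/-- Bhat–Osaka Lemma 2.1: Let `A` be a unital C*-algebra, `H` a
Hilbert space, `ξ` a unit vector, `θ = θ_{ξ,ξ}` the rank-one projection
`η ↦ ⟪ξ, η⟫ • ξ`.  If `c` in the minimal tensor product `A ⊗ B(H)` satisfies
`0 ≤ c ≤ a ⊗ θ`, then `c = b ⊗ θ` for some `0 ≤ b ≤ a` in `A`.  The minimal
tensor product is encoded as a C*-algebra `T` together with a bilinear,
multiplicative, star-preserving, unital map `j : A → B(H) → T` with
`‖j a t‖ = ‖a‖ * ‖t‖` and dense algebraic image. -/
theorem stmt11 {A : Type*}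
    [NormedRing A] [StarRing A] [CStarRing A] [NormedAlgebra ℂ A]
    [CompleteSpace A] [StarModule ℂ A] [PartialOrder A] [StarOrderedRing A]
    {H : Type*} [NormedAddCommGroup H] [InnerProductSpace ℂ H] [CompleteSpace H]
    {T : Type*}
    [NormedRing T] [StarRing T] [CStarRing T] [NormedAlgebra ℂ T]
    [CompleteSpace T] [StarModule ℂ T] [PartialOrder T] [StarOrderedRing T]
    -- the minimal tensor product A ⊗ B(H), via j a t = a ⊗ t
    (j : A → (H →L[ℂ] H) → T)
    (hadd₁ : ∀ a a' t, j (a + a') t = j a t + j a' t)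
    (hadd₂ : ∀ a t t', j a (t + t') = j a t + j a t')
    (hsmul₁ : ∀ (z : ℂ) a t, j (z • a) t = z • j a t)
    (hsmul₂ : ∀ (z : ℂ) a t, j a (z • t) = z • j a t)
    (hmul : ∀ a a' t t', j a t * j a' t' = j (a * a') (t * t'))
    (hstar : ∀ a t, star (j a t) = j (star a) (star t))
    (hone : j 1 1 = 1)
    (hnorm : ∀ a t, ‖j a t‖ = ‖a‖ * ‖t‖)
    (hdense : (Submodule.span ℂ {x : T | ∃ a t, x = j a t}).topologicalClosure = ⊤)
    -- the data
    (ξ : H) (hξ : ‖ξ‖ = 1) (θ : H →L[ℂ] H)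
    (hθ : θ = (innerSL ℂ ξ).smulRight ξ)
    (a : A) (c : T)
    (hc₀ : 0 ≤ c) (hc₁ : c ≤ j a θ) :
    ∃ b : A, 0 ≤ b ∧ b ≤ a ∧ c = j b θ :=
  stmt11_general j hadd₁ hsmul₁ hsmul₂ hmul hstar hnorm hdense ξ hξ θ hθ a c hc₀ hc₁
end

section
/- Let ψ : A ⊗ M_n(ℂ) → B ⊗ M_n(ℂ) (n ≥ 2) be a linear map between C*-algebra tensor products that is simultaneously of the form ψ = ψ₁ ⊗ id_{M_n(ℂ)} for a positive map ψ₁ : A → B and completely copositive. Then ψ = 0. -/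
private lemma bhat_sum_aux {B : Type*} [NormedRing B] [StarRing B] [CStarRing B]
    [PartialOrder B] [StarOrderedRing B] {ι : Type*} [Fintype ι] (c : ι → B)
    (h : ∑ i, star (c i) * c i = 0) : ∀ i, c i = 0 := by
  intro i
  have := (Finset.sum_eq_zero_iff_of_nonneg (fun j _ => star_mul_self_nonneg (c j))).mp h i
    (Finset.mem_univ i)
  exact (CStarRing.star_mul_self_eq_zero_iff _).mp this

/-- Bhat–Osaka Lemma 3.2: Let `A`, `B` be unital C*-algebras and
`n ≥ 2`.  If a linear map `ψ : A ⊗ M_n(ℂ) → B ⊗ M_n(ℂ)` (i.e.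
`M_n(A) → M_n(B)`) is of the form `ψ = ψ₁ ⊗ id_{M_n(ℂ)}` for a positive map
`ψ₁ : A → B` and is completely copositive, then `ψ = 0`. -/
theorem stmt14 {A B : Type*}
    [NormedRing A] [StarRing A] [CStarRing A] [NormedAlgebra ℂ A]
    [CompleteSpace A] [StarModule ℂ A] [PartialOrder A] [StarOrderedRing A]
    [NormedRing B] [StarRing B] [CStarRing B] [NormedAlgebra ℂ B]
    [CompleteSpace B] [StarModule ℂ B] [PartialOrder B] [StarOrderedRing B]
    (n : ℕ) (hn : 2 ≤ n)
    (ψ : Matrix (Fin n) (Fin n) A →ₗ[ℂ] Matrix (Fin n) (Fin n) B)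
    (ψ₁ : A →ₗ[ℂ] B)
    -- ψ₁ is positive
    (hψ₁pos : ∀ a : A, 0 ≤ a → 0 ≤ ψ₁ a)
    -- ψ = ψ₁ ⊗ id_{M_n(ℂ)}
    (hψ : ∀ M : Matrix (Fin n) (Fin n) A, ψ M = M.map ψ₁)
    -- ψ is completely copositive
    (hcop : ∀ k : ℕ, ∀ M : Matrix (Fin k) (Fin k) (Matrix (Fin n) (Fin n) A),
      (∃ N : Matrix (Fin k) (Fin k) (Matrix (Fin n) (Fin n) A), M = star N * N) →
      ∃ N' : Matrix (Fin k) (Fin k) (Matrix (Fin n) (Fin n) B),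
        M.map (fun X => ψ X.transpose) = star N' * N') :
    ψ = 0 := by
  set i0 : Fin n := ⟨0, by omega⟩ with hi0
  set i1 : Fin n := ⟨1, by omega⟩ with hi1
  have h01 : i0 ≠ i1 := by simp [hi0, hi1, Fin.ext_iff]
  -- Key step: ψ₁ kills every element of the form `star x * x`.
  have key : ∀ x : A, ψ₁ (star x * x) = 0 := by
    intro x
    set a : A := star x * x with ha
    set M : Matrix (Fin n) (Fin n) (Matrix (Fin n) (Fin n) A) :=
      Matrix.of fun i j => Matrix.single i j a with hM
    set N : Matrix (Fin n) (Fin n) (Matrix (Fin n) (Fin n) A) :=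
      Matrix.of fun l j => if l = i0 then Matrix.single i0 j x else 0 with hN
    have hstar : ∀ (j : Fin n) (y : A),
        star (Matrix.single i0 j y) = Matrix.single j i0 (star y) := by
      intro j y
      ext r s
      simp only [Matrix.star_apply, Matrix.single, Matrix.of_apply]
      rw [apply_ite (star : A → A), star_zero]
      simp [and_comm]
    have hMN : M = star N * N := by
      ext i j : 2
      have : (star N * N) i j = star (N i0 i) * N i0 j := by
        rw [Matrix.mul_apply]
        refine Finset.sum_eq_single i0 (fun l _ hl => ?_) (by simp)
        rw [Matrix.star_apply]
        simp [hN, hl]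
      rw [this]
      simp only [hN, Matrix.of_apply, eq_self_iff_true, if_true]
      rw [hstar, Matrix.single_mul_single_same]
      rfl
    obtain ⟨N', hN'⟩ := hcop n M ⟨N, hMN⟩
    have E : ∀ i j r s,
        (M.map fun X => ψ X.transpose) i j r s = (star N' * N') i j r s := by
      intro i j r s; rw [hN']
    have hL : ∀ i j r s, (M.map fun X => ψ X.transpose) i j r s
        = ψ₁ (Matrix.single j i a r s) := by
      intro i j r s
      have ht : (Matrix.single i j a).transpose = Matrix.single j i a := by
        ext r' s'
        simp [Matrix.transpose_apply, Matrix.single, and_comm]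
      simp only [Matrix.map_apply, hM, Matrix.of_apply, ht, hψ]
    have hR : ∀ i j r s, (star N' * N') i j r s
        = ∑ l, ∑ t, star ((N' l i) t r) * ((N' l j) t s) := by
      intro i j r s
      rw [Matrix.mul_apply, Matrix.sum_apply]
      refine Finset.sum_congr rfl fun l _ => ?_
      rw [Matrix.mul_apply]
      refine Finset.sum_congr rfl fun t _ => ?_
      rw [Matrix.star_apply, Matrix.star_apply]
    have h1 : ∑ l, ∑ t, star ((N' l i0) t i1) * ((N' l i0) t i1) = 0 := by
      have := E i0 i0 i1 i1
      rw [hL, hR] at this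
      rw [Matrix.single_apply_of_ne, map_zero] at this
      · exact this.symm
      · exact fun h => h01 h.1
    have hc : ∀ l t, (N' l i0) t i1 = 0 := by
      have h1' : ∑ p : Fin n × Fin n, star ((N' p.1 i0) p.2 i1) * ((N' p.1 i0) p.2 i1) = 0 := by
        rw [Fintype.sum_prod_type]; exact h1
      intro l t
      exact bhat_sum_aux _ h1' (l, t)
    have h2 : ψ₁ a = ∑ l, ∑ t, star ((N' l i0) t i1) * ((N' l i1) t i0) := by
      have := E i0 i1 i1 i0
      rw [hL, hR, Matrix.single_apply_same] at this
      exact this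
    rw [ha] at h2
    rw [h2]
    refine Finset.sum_eq_zero fun l _ => Finset.sum_eq_zero fun t _ => ?_
    rw [hc l t, star_zero, zero_mul]
  -- From this, ψ₁ = 0 by polarization.
  have h0 : ψ₁ 1 = 0 := by simpa using key 1
  have hy : ∀ y : A, ψ₁ y + ψ₁ (star y) = 0 := by
    intro y
    have expand : star (1 + y) * (1 + y) = 1 + (y + (star y + star y * y)) := by
      rw [star_add, star_one]; noncomm_ring
    have h := key (1 + y)
    rw [expand, map_add, map_add, map_add, h0, key y] at h
    simpa using h
  have hψ₁ : ∀ y : A, ψ₁ y = 0 := by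
    intro y
    have h1 := hy y
    have h2 := hy (Complex.I • y)
    rw [map_smul, star_smul, map_smul] at h2
    have h3 : ψ₁ (star y) = -ψ₁ y := by
      rw [eq_neg_iff_add_eq_zero, add_comm]; exact h1
    rw [h3] at h2
    have hsI : (star Complex.I) = -Complex.I := by simp
    rw [hsI] at h2
    rw [smul_neg, neg_smul, neg_neg] at h2
    rw [← two_smul ℂ, smul_smul] at h2
    have := smul_eq_zero.mp h2
    rcases this with h | h
    · exact absurd h (mul_ne_zero two_ne_zero Complex.I_ne_zero)
    · exact h
  -- Conclude ψ = 0.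
  apply LinearMap.ext
  intro M
  rw [hψ]
  ext i j
  simp [Matrix.map_apply, hψ₁]
end

section
/- Let φ : A → B(H) and ψ : B → B(K) be unital completely positive maps on unital C*-algebras with minimal Stinespring dilations (π_φ, V_φ, H^φ) and (π_ψ, V_ψ, H^ψ). Then (π_φ ⊗ π_ψ, V_φ ⊗ V_ψ, H^φ ⊗ H^ψ) is a minimal Stinespring dilation of φ ⊗ ψ : A ⊗ B → B(H ⊗ K); in particular the closed span of (π_φ ⊗ π_ψ)(A ⊗ B)(V_φ ⊗ V_ψ)(H ⊗ K) equals H^φ ⊗ H^ψ. -/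
/-!
On elementary tensors `j a b` and `h ⊗ k` the dilation identity for `φ ⊗ ψ` factorises into
the dilation identities for `φ` and `ψ`; both sides are continuous in `u ∈ A ⊗ B`, so it
extends from the dense span of the `j a b`. Minimality holds because the tensor map is
bounded, hence continuous in each variable: a closed subspace containing `x ⊗ y` for `x`, `y`
in two total sets contains every elementary tensor, and these are total in `H^φ ⊗ H^ψ`.
-/

open Submodule

section TensorDensity

variable {𝕜 E F G : Type*} [RCLike 𝕜]
  [NormedAddCommGroup E] [InnerProductSpace 𝕜 E]
  [NormedAddCommGroup F] [InnerProductSpace 𝕜 F]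
  [NormedAddCommGroup G] [InnerProductSpace 𝕜 G]

theorem LinearMap.norm_apply_apply_eq_mul_of_inner (B : E →ₗ[𝕜] F →ₗ[𝕜] G)
    (hB : ∀ x x' y y', inner 𝕜 (B x y) (B x' y') = (inner 𝕜 x x' : 𝕜) * inner 𝕜 y y')
    (x : E) (y : F) : ‖B x y‖ = ‖x‖ * ‖y‖ := by
  have h := hB x x y y
  simp only [inner_self_eq_norm_sq_to_K] at h
  have h' : ‖B x y‖ ^ 2 = (‖x‖ * ‖y‖) ^ 2 := by rw [mul_pow]; exact_mod_cast h
  exact (sq_eq_sq₀ (norm_nonneg _) (by positivity)).mp h'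

theorem ContinuousLinearMap.apply_mem_of_topologicalClosure_span_eq_top (f : E →L[𝕜] G)
    {s : Set E} (hs : (span 𝕜 s).topologicalClosure = ⊤) {M : Submodule 𝕜 G}
    (hM : IsClosed (M : Set G)) (hsM : ∀ x ∈ s, f x ∈ M) (x : E) : f x ∈ M := by
  have hle : (span 𝕜 s).topologicalClosure ≤ M.comap (f : E →ₗ[𝕜] G) :=
    topologicalClosure_minimal _ (span_le.mpr hsM) (hM.preimage f.continuous)
  exact hle (hs ▸ trivial)

theorem topologicalClosure_span_image2_eq_top (B : E →ₗ[𝕜] F →ₗ[𝕜] G)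
    (hB : ∀ x x' y y', inner 𝕜 (B x y) (B x' y') = (inner 𝕜 x x' : 𝕜) * inner 𝕜 y y')
    (hBdense : (span 𝕜 {z : G | ∃ x y, z = B x y}).topologicalClosure = ⊤)
    {s : Set E} {t : Set F} (hs : (span 𝕜 s).topologicalClosure = ⊤)
    (ht : (span 𝕜 t).topologicalClosure = ⊤) :
    (span 𝕜 (Set.image2 (fun x y => B x y) s t)).topologicalClosure = ⊤ := by
  set M := (span 𝕜 (Set.image2 (fun x y => B x y) s t)).topologicalClosure
  have hM : IsClosed (M : Set G) := isClosed_topologicalClosure _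
  let Bc : E →L[𝕜] F →L[𝕜] G := B.mkContinuous₂ 1 fun x y => by
    rw [B.norm_apply_apply_eq_mul_of_inner hB, one_mul]
  have hBc : ∀ x y, B x y ∈ M := fun x y =>
    (Bc.flip y).apply_mem_of_topologicalClosure_span_eq_top hs hM (fun x hx =>
      (Bc x).apply_mem_of_topologicalClosure_span_eq_top ht hM (fun y hy =>
        le_topologicalClosure _ (subset_span (Set.mem_image2_of_mem hx hy))) y) x
  refine top_unique (hBdense ▸ topologicalClosure_minimal _ (span_le.mpr ?_) hM)
  rintro _ ⟨x, y, rfl⟩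
  exact hBc x y

theorem ContinuousLinearMap.ext_inner_of_topologicalClosure_span_eq_top {T S : E →L[𝕜] F}
    {s : Set E} {t : Set F} (hs : (span 𝕜 s).topologicalClosure = ⊤)
    (ht : (span 𝕜 t).topologicalClosure = ⊤)
    (hTS : ∀ x ∈ s, ∀ y ∈ t, inner 𝕜 (T x) y = inner 𝕜 (S x) y) : T = S := by
  refine ext_on (dense_iff_topologicalClosure_eq_top.mpr hs) fun x hx => ?_
  refine ext_inner_right 𝕜 fun y => ?_
  have h : innerSL 𝕜 (T x) = innerSL 𝕜 (S x) :=
    ext_on (dense_iff_topologicalClosure_eq_top.mpr ht) (hTS x hx)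
  exact congr($h y)

end TensorDensity

theorem stmt17_general {A B : Type*}
    [NormedRing A] [StarRing A] [NormedAlgebra ℂ A]
    [NormedRing B] [StarRing B] [NormedAlgebra ℂ B]
    {H K Hf Hg : Type*}
    [NormedAddCommGroup H] [InnerProductSpace ℂ H] [CompleteSpace H]
    [NormedAddCommGroup K] [InnerProductSpace ℂ K] [CompleteSpace K]
    [NormedAddCommGroup Hf] [InnerProductSpace ℂ Hf] [CompleteSpace Hf]
    [NormedAddCommGroup Hg] [InnerProductSpace ℂ Hg] [CompleteSpace Hg]
    -- the unital completely positive maps φ and ψ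
    (φ : A →ₗ[ℂ] (H →L[ℂ] H))
    (ψ : B →ₗ[ℂ] (K →L[ℂ] K))
    -- minimal Stinespring dilations of φ and ψ
    (πφ : A →⋆ₐ[ℂ] (Hf →L[ℂ] Hf)) (Vφ : H →L[ℂ] Hf)
    (hφdil : ∀ a : A, φ a = (ContinuousLinearMap.adjoint Vφ).comp ((πφ a).comp Vφ))
    (hφmin : (Submodule.span ℂ
      {x : Hf | ∃ (a : A) (ξ : H), x = πφ a (Vφ ξ)}).topologicalClosure = ⊤)
    (πψ : B →⋆ₐ[ℂ] (Hg →L[ℂ] Hg)) (Vψ : K →L[ℂ] Hg)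
    (hψdil : ∀ b : B, ψ b = (ContinuousLinearMap.adjoint Vψ).comp ((πψ b).comp Vψ))
    (hψmin : (Submodule.span ℂ
      {x : Hg | ∃ (b : B) (η : K), x = πψ b (Vψ η)}).topologicalClosure = ⊤)
    -- the Hilbert tensor products H ⊗ K and H^φ ⊗ H^ψ
    {HK : Type*} [NormedAddCommGroup HK] [InnerProductSpace ℂ HK] [CompleteSpace HK]
    (tm : H →ₗ[ℂ] K →ₗ[ℂ] HK)
    (htm : ∀ (h h' : H) (k k' : K),
      inner ℂ (tm h k) (tm h' k') = (inner ℂ h h' : ℂ) * (inner ℂ k k' : ℂ))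
    (htmdense : (Submodule.span ℂ {x : HK | ∃ h k, x = tm h k}).topologicalClosure = ⊤)
    {HfHg : Type*} [NormedAddCommGroup HfHg] [InnerProductSpace ℂ HfHg] [CompleteSpace HfHg]
    (tm' : Hf →ₗ[ℂ] Hg →ₗ[ℂ] HfHg)
    (htm' : ∀ (x x' : Hf) (y y' : Hg),
      inner ℂ (tm' x y) (tm' x' y') = (inner ℂ x x' : ℂ) * (inner ℂ y y' : ℂ))
    (htmdense' : (Submodule.span ℂ {z : HfHg | ∃ x y, z = tm' x y}).topologicalClosure = ⊤)
    -- the minimal C*-tensor product A ⊗ B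
    {AB : Type*} [NormedRing AB] [StarRing AB] [CStarRing AB] [NormedAlgebra ℂ AB]
    [CompleteSpace AB] [StarModule ℂ AB]
    (j : A → B → AB)
    (hdense : (Submodule.span ℂ {x : AB | ∃ a b, x = j a b}).topologicalClosure = ⊤)
    -- the tensor maps φ ⊗ ψ, π_φ ⊗ π_ψ and V_φ ⊗ V_ψ
    (Φ : AB →ₗ[ℂ] (HK →L[ℂ] HK)) (hΦcont : Continuous Φ)
    (hΦ : ∀ (a : A) (b : B) (h : H) (k : K), (Φ (j a b)) (tm h k) = tm (φ a h) (ψ b k))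
    (Pt : AB →⋆ₐ[ℂ] (HfHg →L[ℂ] HfHg))
    (hPt : ∀ (a : A) (b : B) (x : Hf) (y : Hg),
      (Pt (j a b)) (tm' x y) = tm' (πφ a x) (πψ b y))
    (VW : HK →L[ℂ] HfHg)
    (hVW : ∀ (h : H) (k : K), VW (tm h k) = tm' (Vφ h) (Vψ k)) :
    -- (π_φ ⊗ π_ψ, V_φ ⊗ V_ψ, H^φ ⊗ H^ψ) is a Stinespring dilation of φ ⊗ ψ …
    (∀ u : AB, Φ u = (ContinuousLinearMap.adjoint VW).comp ((Pt u).comp VW)) ∧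
    -- … and it is minimal
    (Submodule.span ℂ
      {z : HfHg | ∃ (u : AB) (ξ : HK), z = Pt u (VW ξ)}).topologicalClosure = ⊤ := by
  let _ : CStarAlgebra AB := {}
  -- *-homomorphisms between C*-algebras are contractive
  have hPtcont : Continuous Pt := by
    open scoped CStarAlgebra in exact map_continuous Pt
  have hgen : ∀ a b,
      Φ (j a b) = (ContinuousLinearMap.adjoint VW).comp ((Pt (j a b)).comp VW) := fun a b =>
    ContinuousLinearMap.ext_inner_of_topologicalClosure_span_eq_top htmdense htmdense <| by
      rintro _ ⟨h, k, rfl⟩ _ ⟨h', k', rfl⟩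
      simp [hΦ, htm, hVW, hPt, htm', hφdil, hψdil, ContinuousLinearMap.adjoint_inner_left]
  refine ⟨fun u => ?_, ?_⟩
  · let compress : AB →L[ℂ] HK →L[ℂ] HK :=
      (ContinuousLinearMap.compL ℂ HK HfHg HK (ContinuousLinearMap.adjoint VW)).comp
        (((ContinuousLinearMap.compL ℂ HK HfHg HfHg).flip VW).comp ⟨Pt.toLinearMap, hPtcont⟩)
    have h : (⟨Φ, hΦcont⟩ : AB →L[ℂ] HK →L[ℂ] HK) = compress :=
      ContinuousLinearMap.ext_on (dense_iff_topologicalClosure_eq_top.mpr hdense) <| by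
        rintro _ ⟨a, b, rfl⟩
        exact hgen a b
    exact congr($h u)
  · have htotal := topologicalClosure_span_image2_eq_top tm' htm' htmdense' hφmin hψmin
    refine top_unique <| htotal.ge.trans (topologicalClosure_mono (span_mono ?_))
    rintro _ ⟨_, ⟨a, h, rfl⟩, _, ⟨b, k, rfl⟩, rfl⟩
    exact ⟨j a b, tm h k, by rw [hVW, hPt]⟩

/-- C*-case of Proposition 3: Let `φ : A → B(H)`, `ψ : B → B(K)`
be unital completely positive maps with minimal Stinespring dilations
`(π_φ, V_φ, H^φ)` and `(π_ψ, V_ψ, H^ψ)`.  Then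
`(π_φ ⊗ π_ψ, V_φ ⊗ V_ψ, H^φ ⊗ H^ψ)` is a minimal Stinespring dilation of
`φ ⊗ ψ : A ⊗ B → B(H ⊗ K)`; in particular the closed span of
`(π_φ ⊗ π_ψ)(A ⊗ B)(V_φ ⊗ V_ψ)(H ⊗ K)` is all of `H^φ ⊗ H^ψ`.  Hilbert-space
and minimal C*-tensor products are encoded by bilinear maps with the
appropriate universal relations and dense span. -/
theorem stmt17 {A B : Type*}
    [NormedRing A] [StarRing A] [CStarRing A] [NormedAlgebra ℂ A]
    [CompleteSpace A] [StarModule ℂ A]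
    [NormedRing B] [StarRing B] [CStarRing B] [NormedAlgebra ℂ B]
    [CompleteSpace B] [StarModule ℂ B]
    {H K Hf Hg : Type*}
    [NormedAddCommGroup H] [InnerProductSpace ℂ H] [CompleteSpace H]
    [NormedAddCommGroup K] [InnerProductSpace ℂ K] [CompleteSpace K]
    [NormedAddCommGroup Hf] [InnerProductSpace ℂ Hf] [CompleteSpace Hf]
    [NormedAddCommGroup Hg] [InnerProductSpace ℂ Hg] [CompleteSpace Hg]
    -- the unital completely positive maps φ and ψ
    (φ : A →ₗ[ℂ] (H →L[ℂ] H)) (hφ1 : φ 1 = 1)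
    (hφcp : ∀ n : ℕ, ∀ M : Matrix (Fin n) (Fin n) A,
      (∃ N : Matrix (Fin n) (Fin n) A, M = star N * N) →
      ∃ N' : Matrix (Fin n) (Fin n) (H →L[ℂ] H), M.map φ = star N' * N')
    (ψ : B →ₗ[ℂ] (K →L[ℂ] K)) (hψ1 : ψ 1 = 1)
    (hψcp : ∀ n : ℕ, ∀ M : Matrix (Fin n) (Fin n) B,
      (∃ N : Matrix (Fin n) (Fin n) B, M = star N * N) →
      ∃ N' : Matrix (Fin n) (Fin n) (K →L[ℂ] K), M.map ψ = star N' * N')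
    -- minimal Stinespring dilations of φ and ψ
    (πφ : A →⋆ₐ[ℂ] (Hf →L[ℂ] Hf)) (Vφ : H →L[ℂ] Hf)
    (hφdil : ∀ a : A, φ a = (ContinuousLinearMap.adjoint Vφ).comp ((πφ a).comp Vφ))
    (hφmin : (Submodule.span ℂ
      {x : Hf | ∃ (a : A) (ξ : H), x = πφ a (Vφ ξ)}).topologicalClosure = ⊤)
    (πψ : B →⋆ₐ[ℂ] (Hg →L[ℂ] Hg)) (Vψ : K →L[ℂ] Hg)
    (hψdil : ∀ b : B, ψ b = (ContinuousLinearMap.adjoint Vψ).comp ((πψ b).comp Vψ))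
    (hψmin : (Submodule.span ℂ
      {x : Hg | ∃ (b : B) (η : K), x = πψ b (Vψ η)}).topologicalClosure = ⊤)
    -- the Hilbert tensor products H ⊗ K and H^φ ⊗ H^ψ
    {HK : Type*} [NormedAddCommGroup HK] [InnerProductSpace ℂ HK] [CompleteSpace HK]
    (tm : H →ₗ[ℂ] K →ₗ[ℂ] HK)
    (htm : ∀ (h h' : H) (k k' : K),
      inner ℂ (tm h k) (tm h' k') = (inner ℂ h h' : ℂ) * (inner ℂ k k' : ℂ))
    (htmdense : (Submodule.span ℂ {x : HK | ∃ h k, x = tm h k}).topologicalClosure = ⊤)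
    {HfHg : Type*} [NormedAddCommGroup HfHg] [InnerProductSpace ℂ HfHg] [CompleteSpace HfHg]
    (tm' : Hf →ₗ[ℂ] Hg →ₗ[ℂ] HfHg)
    (htm' : ∀ (x x' : Hf) (y y' : Hg),
      inner ℂ (tm' x y) (tm' x' y') = (inner ℂ x x' : ℂ) * (inner ℂ y y' : ℂ))
    (htmdense' : (Submodule.span ℂ {z : HfHg | ∃ x y, z = tm' x y}).topologicalClosure = ⊤)
    -- the minimal C*-tensor product A ⊗ B
    {AB : Type*} [NormedRing AB] [StarRing AB] [CStarRing AB] [NormedAlgebra ℂ AB]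
    [CompleteSpace AB] [StarModule ℂ AB]
    (j : A → B → AB)
    (hadd₁ : ∀ a a' b, j (a + a') b = j a b + j a' b)
    (hadd₂ : ∀ a b b', j a (b + b') = j a b + j a b')
    (hsmul₁ : ∀ (z : ℂ) a b, j (z • a) b = z • j a b)
    (hsmul₂ : ∀ (z : ℂ) a b, j a (z • b) = z • j a b)
    (hmul : ∀ a a' b b', j a b * j a' b' = j (a * a') (b * b'))
    (hstar : ∀ a b, star (j a b) = j (star a) (star b))
    (hone : j 1 1 = 1)
    (hnorm : ∀ a b, ‖j a b‖ = ‖a‖ * ‖b‖)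
    (hdense : (Submodule.span ℂ {x : AB | ∃ a b, x = j a b}).topologicalClosure = ⊤)
    -- the tensor maps φ ⊗ ψ, π_φ ⊗ π_ψ and V_φ ⊗ V_ψ
    (Φ : AB →ₗ[ℂ] (HK →L[ℂ] HK)) (hΦcont : Continuous Φ)
    (hΦ : ∀ (a : A) (b : B) (h : H) (k : K), (Φ (j a b)) (tm h k) = tm (φ a h) (ψ b k))
    (Pt : AB →⋆ₐ[ℂ] (HfHg →L[ℂ] HfHg))
    (hPt : ∀ (a : A) (b : B) (x : Hf) (y : Hg),
      (Pt (j a b)) (tm' x y) = tm' (πφ a x) (πψ b y))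
    (VW : HK →L[ℂ] HfHg)
    (hVW : ∀ (h : H) (k : K), VW (tm h k) = tm' (Vφ h) (Vψ k)) :
    -- (π_φ ⊗ π_ψ, V_φ ⊗ V_ψ, H^φ ⊗ H^ψ) is a Stinespring dilation of φ ⊗ ψ …
    (∀ u : AB, Φ u = (ContinuousLinearMap.adjoint VW).comp ((Pt u).comp VW)) ∧
    -- … and it is minimal
    (Submodule.span ℂ
      {z : HfHg | ∃ (u : AB) (ξ : HK), z = Pt u (VW ξ)}).topologicalClosure = ⊤ :=
  stmt17_general φ ψ πφ Vφ hφdil hφmin πψ Vψ hψdil hψmin tm htm htmdense tm' htm' htmdense' j hdense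
    Φ hΦcont hΦ Pt hPt VW hVW
end
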